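/- Let Φ be a quantum channel on an n-dimensional Hilbert space and define Ψ(ρ ⊗ |i⟩⟨i|) = X_i Φ(ρ) X_i†, extended linearly, where X₀,…,X_{n²−1} are the generalized Pauli (Heisenberg–Weyl) operators. Then the Holevo capacity satisfies χ(Ψ) = log n − min_ρ H(Φ(ρ)). -/

import Mathlib

open Matrix ComplexOrder

/-- A density operator: positive semidefinite with trace 1. -/
def IsDensity {d : Type*} [Fintype d] (ρ : Matrix d d ℂ) : Prop :=
  ρ.PosSemidef ∧ ρ.trace = 1

/-- The channel with Kraus operators `E k`. -/
noncomputable def krausChannel {n r : ℕ} (E : Fin r → Matrix (Fin n) (Fin n) ℂ)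
    (ρ : Matrix (Fin n) (Fin n) ℂ) : Matrix (Fin n) (Fin n) ℂ :=
  ∑ k, E k * ρ * (E k)ᴴ

/-- Von Neumann entropy via eigenvalues (junk value `0` for non-Hermitian input). -/
noncomputable def vnEntropy {d : Type*} [Fintype d] [DecidableEq d]
    (ρ : Matrix d d ℂ) : ℝ :=
  if h : ρ.IsHermitian then -∑ i, h.eigenvalues i * Real.log (h.eigenvalues i) else 0

/-- The Holevo capacity of a channel `Φ`. -/
noncomputable def holevoCap {d e : Type*} [Fintype d] [Fintype e] [DecidableEq e]
    (Φ : Matrix d d ℂ → Matrix e e ℂ) : ℝ :=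
  sSup {x : ℝ | ∃ (m : ℕ) (p : Fin m → ℝ) (ρ : Fin m → Matrix d d ℂ),
    (∀ i, 0 ≤ p i) ∧ (∑ i, p i = 1) ∧ (∀ i, IsDensity (ρ i)) ∧
    x = vnEntropy (∑ i, (p i : ℂ) • Φ (ρ i)) - ∑ i, p i * vnEntropy (Φ (ρ i))}

/-- The cyclic shift `T|j⟩ = |j+1 mod n⟩`. -/
def shiftT (n : ℕ) [NeZero n] : Matrix (Fin n) (Fin n) ℂ :=
  Matrix.of fun i j => if i = j + 1 then 1 else 0

/-- The phase operator `R|j⟩ = e^{2πij/n}|j⟩`. -/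
noncomputable def phaseR (n : ℕ) [NeZero n] : Matrix (Fin n) (Fin n) ℂ :=
  Matrix.diagonal fun j => Complex.exp (2 * Real.pi * Complex.I * (j : ℕ) / n)

/-- The generalized Pauli (Heisenberg–Weyl) operator `X_{mn+d} = T^m R^d`. -/
noncomputable def genPauli {n : ℕ} [NeZero n] (md : Fin n × Fin n) :
    Matrix (Fin n) (Fin n) ℂ :=
  shiftT n ^ (md.1 : ℕ) * phaseR n ^ (md.2 : ℕ)

/-- The `(i,i)` block of an operator on `H ⊗ ℂ^{n²}`. -/
noncomputable def blockAt {n : ℕ} (i : Fin n × Fin n)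
    (ρ : Matrix (Fin n × (Fin n × Fin n)) (Fin n × (Fin n × Fin n)) ℂ) :
    Matrix (Fin n) (Fin n) ℂ :=
  Matrix.of fun a b => ρ (a, i) (b, i)

/-- The channel `Ψ(ρ ⊗ |i⟩⟨i|) = X_i Φ(ρ) X_i†`, extended linearly
(off-diagonal blocks of the classical register are discarded). -/
noncomputable def pauliMixChannel {n r : ℕ} [NeZero n]
    (E : Fin r → Matrix (Fin n) (Fin n) ℂ)
    (ρ : Matrix (Fin n × (Fin n × Fin n)) (Fin n × (Fin n × Fin n)) ℂ) :
    Matrix (Fin n) (Fin n) ℂ :=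
  ∑ i : Fin n × Fin n, genPauli i * krausChannel E (blockAt i ρ) * (genPauli i)ᴴ

/-!
Write `Φ = krausChannel E` and `Ψ = pauliMixChannel E`. Because the `X_i` form a unitary
1-design, `∑ᵢ X_i σ X_i† = n (tr σ) • 1`: averaging over the phases `R^d` kills the off-diagonal
entries and averaging over the shifts `T^m` spreads the diagonal evenly. Hence the uniform ensemble
of the states `ρ ⊗ |i⟩⟨i|`, whose outputs are `X_i Φ(ρ) X_i†`, has the maximally mixed state as
average output and attains `log n - H(Φ ρ)`. Conversely the entropy of any average output is at
most `log n`, and every output `Ψ(ρ)` is a convex combination of unitary conjugates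
`X_i Φ(σ_i) X_i†`, so by concavity and unitary invariance `H(Ψ ρ)` is at least the minimal output
entropy of `Φ`.

Concavity of the von Neumann entropy comes from Jensen's inequality for `negMulLog`: the diagonal
of a state in any orthonormal basis is the image of its spectrum under a doubly stochastic matrix.
-/

open Real
open scoped Kronecker

section RealInequalities

variable {d : Type*} [Fintype d]

lemma le_sum_mul_of_forall_le {ι : Type*} [Fintype ι] {q a : ι → ℝ} {c : ℝ}
    (hq0 : ∀ i, 0 ≤ q i) (hq1 : ∑ i, q i = 1) (h : ∀ i, c ≤ a i) : c ≤ ∑ i, q i * a i :=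
  calc c = ∑ i, q i * c := by rw [← Finset.sum_mul, hq1, one_mul]
    _ ≤ ∑ i, q i * a i := Finset.sum_le_sum fun i _ => mul_le_mul_of_nonneg_left (h i) (hq0 i)

lemma csSup_eq_sub_csInf {A S : Set ℝ} {c : ℝ} (hS : S.Nonempty)
    (hA : ∀ x ∈ A, x ≤ c - sInf S) (hSA : ∀ y ∈ S, c - y ∈ A) : sSup A = c - sInf S := by
  obtain ⟨y₀, hy₀⟩ := hS
  refine le_antisymm (csSup_le ⟨_, hSA y₀ hy₀⟩ hA) ?_
  have hsub : c - sSup A ≤ sInf S := le_csInf ⟨y₀, hy₀⟩ fun y hy => by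
    linarith [le_csSup ⟨_, hA⟩ (hSA y hy)]
  linarith

lemma sum_negMulLog_le_log_card [Nonempty d] {p : d → ℝ} (hp0 : ∀ i, 0 ≤ p i)
    (hp1 : ∑ i, p i = 1) : ∑ i, negMulLog (p i) ≤ log (Fintype.card d) := by
  have hN : 0 < (Fintype.card d : ℝ) := by exact_mod_cast Fintype.card_pos
  have h := concaveOn_negMulLog.le_map_sum (t := Finset.univ)
    (w := fun _ => (Fintype.card d : ℝ)⁻¹) (p := p) (fun _ _ => by positivity)
    (by simp [hN.ne']) (fun i _ => hp0 i)
  simp only [smul_eq_mul, ← Finset.mul_sum, hp1, mul_one] at h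
  rw [negMulLog, log_inv, neg_mul_neg] at h
  exact le_of_mul_le_mul_left h (inv_pos.mpr hN)

lemma sum_negMulLog_le_sum_negMulLog_mulVec [DecidableEq d] {w : Matrix d d ℝ}
    (hw : w ∈ doublyStochastic ℝ d) {μ : d → ℝ} (hμ : ∀ l, 0 ≤ μ l) :
    ∑ l, negMulLog (μ l) ≤ ∑ k, negMulLog ((w *ᵥ μ) k) :=
  calc ∑ l, negMulLog (μ l) = ∑ k, ∑ l, w k l * negMulLog (μ l) := by
        rw [Finset.sum_comm]
        simp [← Finset.sum_mul, sum_col_of_mem_doublyStochastic hw]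
    _ ≤ ∑ k, negMulLog ((w *ᵥ μ) k) := Finset.sum_le_sum fun k _ => by
        simpa [mulVec, dotProduct] using concaveOn_negMulLog.le_map_sum
          (fun l _ => nonneg_of_mem_doublyStochastic hw) (sum_row_of_mem_doublyStochastic hw k)
          (fun l _ => hμ l)

end RealInequalities

section Entropy

variable {d : Type*} [Fintype d] [DecidableEq d]

lemma normSq_mem_doublyStochastic_of_mem_unitaryGroup {W : Matrix d d ℂ}
    (hW : W ∈ unitaryGroup d ℂ) :
    (Matrix.of fun k l => Complex.normSq (W k l)) ∈ doublyStochastic ℝ d := by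
  refine mem_doublyStochastic_iff_sum.2
    ⟨fun _ _ => Complex.normSq_nonneg _, fun k => ?_, fun l => ?_⟩
  · have h := congr_fun₂ (mem_unitaryGroup_iff.mp hW) k k
    simp only [mul_apply, star_apply, one_apply_eq, RCLike.star_def, Complex.mul_conj] at h
    exact_mod_cast h
  · have h := congr_fun₂ (mem_unitaryGroup_iff'.mp hW) l l
    simp only [mul_apply, star_apply, one_apply_eq, RCLike.star_def,
      ← Complex.normSq_eq_conj_mul_self] at h
    exact_mod_cast h

lemma mul_diagonal_mul_conjTranspose_apply_self (W : Matrix d d ℂ) (μ : d → ℝ) (k : d) :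
    (W * diagonal (fun l => (μ l : ℂ)) * Wᴴ) k k
      = ∑ l, ((Complex.normSq (W k l) * μ l : ℝ) : ℂ) := by
  rw [mul_apply]
  simp only [mul_diagonal, conjTranspose_apply, RCLike.star_def]
  refine Finset.sum_congr rfl fun l _ => ?_
  rw [Complex.ofReal_mul, ← Complex.mul_conj]
  ring

lemma Matrix.IsHermitian.eigenvalues_eq_re_star_mul_mul {A : Matrix d d ℂ}
    (hA : A.IsHermitian) (k : d) :
    hA.eigenvalues k =
      ((star (hA.eigenvectorUnitary : Matrix d d ℂ) * A * hA.eigenvectorUnitary) k k).re := by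
  rw [← Unitary.conjStarAlgAut_star_apply (S := ℂ), hA.conjStarAlgAut_star_eigenvectorUnitary]
  simp

lemma vnEntropy_eq_sum_negMulLog {A : Matrix d d ℂ} (hA : A.IsHermitian) :
    vnEntropy A = ∑ i, negMulLog (hA.eigenvalues i) := by
  simp [vnEntropy, hA, negMulLog, Finset.sum_neg_distrib]

lemma vnEntropy_unitary_conj {A X : Matrix d d ℂ} (hA : A.IsHermitian)
    (hX : X ∈ unitaryGroup d ℂ) : vnEntropy (X * A * Xᴴ) = vnEntropy A := by
  have hXA : (X * A * Xᴴ).IsHermitian := isHermitian_mul_mul_conjTranspose X hA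
  have hspec : hXA.eigenvalues = hA.eigenvalues := by
    rw [hXA.eigenvalues_eq_eigenvalues_iff hA, charpoly_mul_comm, ← mul_assoc,
      ← star_eq_conjTranspose, mem_unitaryGroup_iff'.mp hX, one_mul]
  rw [vnEntropy_eq_sum_negMulLog hXA, vnEntropy_eq_sum_negMulLog hA, hspec]

lemma Matrix.PosSemidef.vnEntropy_le_sum_negMulLog_diag {A : Matrix d d ℂ} (hA : A.PosSemidef)
    {V : Matrix d d ℂ} (hV : V ∈ unitaryGroup d ℂ) :
    vnEntropy A ≤ ∑ k, negMulLog ((Vᴴ * A * V) k k).re := by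
  set U : Matrix d d ℂ := (hA.1.eigenvectorUnitary : Matrix d d ℂ)
  have hW : Vᴴ * U ∈ unitaryGroup d ℂ := mul_mem (Unitary.star_mem hV) hA.1.eigenvectorUnitary.2
  have hconj : Vᴴ * A * V
      = (Vᴴ * U) * diagonal (fun l => (hA.1.eigenvalues l : ℂ)) * (Vᴴ * U)ᴴ := by
    conv_lhs => rw [hA.1.spectral_theorem, Unitary.conjStarAlgAut_apply]
    simp only [conjTranspose_mul, conjTranspose_conjTranspose, star_eq_conjTranspose,
      Function.comp_def]
    noncomm_ring
  have hdiag : ∀ k, ((Vᴴ * A * V) k k).re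
      = ((of fun k l => Complex.normSq ((Vᴴ * U) k l)) *ᵥ hA.1.eigenvalues) k := fun k => by
    rw [hconj, mul_diagonal_mul_conjTranspose_apply_self, ← Complex.ofReal_sum, Complex.ofReal_re]
    rfl
  simp only [hdiag]
  rw [vnEntropy_eq_sum_negMulLog hA.1]
  exact sum_negMulLog_le_sum_negMulLog_mulVec
    (normSq_mem_doublyStochastic_of_mem_unitaryGroup hW) hA.eigenvalues_nonneg

lemma sum_mul_vnEntropy_le_vnEntropy_sum_smul {ι : Type*} [Fintype ι] {q : ι → ℝ}
    (hq0 : ∀ i, 0 ≤ q i) (hq1 : ∑ i, q i = 1) {τ : ι → Matrix d d ℂ}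
    (hτ : ∀ i, (τ i).PosSemidef) :
    ∑ i, q i * vnEntropy (τ i) ≤ vnEntropy (∑ i, (q i : ℂ) • τ i) := by
  set A := ∑ i, (q i : ℂ) • τ i
  have hA : A.PosSemidef :=
    posSemidef_sum _ fun i _ => (hτ i).smul (Complex.zero_le_real.mpr (hq0 i))
  set U : Matrix d d ℂ := (hA.1.eigenvectorUnitary : Matrix d d ℂ)
  set m : ι → d → ℝ := fun i k => ((Uᴴ * τ i * U) k k).re
  have hm : ∀ i k, 0 ≤ m i k := fun i k =>
    (Complex.nonneg_iff.mp ((hτ i).conjTranspose_mul_mul_same U).diag_nonneg).1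
  have heig : ∀ k, hA.1.eigenvalues k = ∑ i, q i * m i k := fun k => by
    rw [hA.1.eigenvalues_eq_re_star_mul_mul, star_eq_conjTranspose, Finset.mul_sum,
      Finset.sum_mul, Matrix.sum_apply, Complex.re_sum]
    simp [m, U]
  calc ∑ i, q i * vnEntropy (τ i) ≤ ∑ i, q i * ∑ k, negMulLog (m i k) :=
        Finset.sum_le_sum fun i _ => mul_le_mul_of_nonneg_left
          ((hτ i).vnEntropy_le_sum_negMulLog_diag hA.1.eigenvectorUnitary.2) (hq0 i)
    _ = ∑ k, ∑ i, q i * negMulLog (m i k) := by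
        simp only [Finset.mul_sum]
        exact Finset.sum_comm
    _ ≤ ∑ k, negMulLog (hA.1.eigenvalues k) := Finset.sum_le_sum fun k _ => by
        rw [heig]
        simpa using concaveOn_negMulLog.le_map_sum (fun i _ => hq0 i) hq1 (fun i _ => hm i k)
    _ = vnEntropy A := (vnEntropy_eq_sum_negMulLog hA.1).symm

end Entropy

section Density

variable {d : Type*} [Fintype d]

lemma isDensity_sum_smul {ι : Type*} [Fintype ι] {p : ι → ℝ} (hp0 : ∀ i, 0 ≤ p i)
    (hp1 : ∑ i, p i = 1) {ρ : ι → Matrix d d ℂ} (hρ : ∀ i, IsDensity (ρ i)) :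
    IsDensity (∑ i, (p i : ℂ) • ρ i) := by
  refine ⟨posSemidef_sum _ fun i _ => (hρ i).1.smul (Complex.zero_le_real.mpr (hp0 i)), ?_⟩
  simp only [trace_sum, trace_smul, (hρ _).2, smul_eq_mul, mul_one]
  exact_mod_cast hp1

variable [DecidableEq d]

lemma IsDensity.sum_eigenvalues {A : Matrix d d ℂ} (hA : IsDensity A) :
    ∑ i, hA.1.1.eigenvalues i = 1 := by
  simpa using congrArg Complex.re (hA.1.1.trace_eq_sum_eigenvalues.symm.trans hA.2)

lemma IsDensity.vnEntropy_nonneg {A : Matrix d d ℂ} (hA : IsDensity A) : 0 ≤ vnEntropy A := by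
  rw [vnEntropy_eq_sum_negMulLog hA.1.1]
  refine Finset.sum_nonneg fun i _ => negMulLog_nonneg (hA.1.eigenvalues_nonneg i) ?_
  rw [← hA.sum_eigenvalues]
  exact Finset.single_le_sum (fun j _ => hA.1.eigenvalues_nonneg j) (Finset.mem_univ i)

lemma IsDensity.vnEntropy_le_log_card [Nonempty d] {A : Matrix d d ℂ} (hA : IsDensity A) :
    vnEntropy A ≤ log (Fintype.card d) := by
  rw [vnEntropy_eq_sum_negMulLog hA.1.1]
  exact sum_negMulLog_le_log_card hA.1.eigenvalues_nonneg hA.sum_eigenvalues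

lemma isDensity_maximallyMixed [Nonempty d] :
    IsDensity ((Fintype.card d : ℂ)⁻¹ • (1 : Matrix d d ℂ)) := by
  have hN : (Fintype.card d : ℂ) ≠ 0 := by exact_mod_cast Fintype.card_ne_zero
  refine ⟨PosSemidef.one.smul ?_, by simp [hN]⟩
  rw [← Complex.ofReal_natCast, ← Complex.ofReal_inv]
  exact Complex.zero_le_real.mpr (by positivity)

lemma vnEntropy_maximallyMixed [Nonempty d] :
    vnEntropy ((Fintype.card d : ℂ)⁻¹ • (1 : Matrix d d ℂ)) = log (Fintype.card d) := by
  have hH : ((Fintype.card d : ℂ)⁻¹ • (1 : Matrix d d ℂ)).IsHermitian := by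
    simp [IsHermitian]
  have heig : ∀ k, hH.eigenvalues k = (Fintype.card d : ℝ)⁻¹ := fun k => by
    rw [hH.eigenvalues_eq_re_star_mul_mul, Matrix.mul_smul, Matrix.smul_mul, mul_one,
      Unitary.coe_star_mul_self]
    simp
  have hN : 0 < (Fintype.card d : ℝ) := by exact_mod_cast Fintype.card_pos
  rw [vnEntropy_eq_sum_negMulLog hH]
  simp only [heig, Finset.sum_const, Finset.card_univ, nsmul_eq_mul, negMulLog, log_inv]
  field_simp

lemma Matrix.PosSemidef.exists_isDensity_smul_eq [Nonempty d] {B : Matrix d d ℂ}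
    (hB : B.PosSemidef) : ∃ σ, IsDensity σ ∧ B = (B.trace.re : ℂ) • σ := by
  have htr : B.trace = (B.trace.re : ℂ) :=
    Complex.eq_re_of_ofReal_le (by rw [Complex.ofReal_zero]; exact hB.trace_nonneg)
  have hr0 : 0 ≤ B.trace.re := (Complex.nonneg_iff.mp hB.trace_nonneg).1
  set r := B.trace.re
  by_cases h0 : r = 0
  · refine ⟨_, isDensity_maximallyMixed, ?_⟩
    rw [h0, Complex.ofReal_zero] at htr
    simp [hB.trace_eq_zero_iff.mp htr, h0]
  · refine ⟨((r⁻¹ : ℝ) : ℂ) • B,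
      ⟨hB.smul (Complex.zero_le_real.mpr (inv_nonneg.mpr hr0)), ?_⟩, ?_⟩
    · rw [trace_smul, smul_eq_mul, htr, ← Complex.ofReal_mul, inv_mul_cancel₀ h0,
        Complex.ofReal_one]
    · rw [smul_smul, ← Complex.ofReal_mul, mul_inv_cancel₀ h0, Complex.ofReal_one, one_smul]

end Density

section Kraus

variable {n r : ℕ} {E : Fin r → Matrix (Fin n) (Fin n) ℂ}

lemma krausChannel_smul (c : ℂ) (ρ : Matrix (Fin n) (Fin n) ℂ) :
    krausChannel E (c • ρ) = c • krausChannel E ρ := by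
  simp only [krausChannel, Finset.smul_sum, Matrix.mul_smul, Matrix.smul_mul]

lemma krausChannel_zero : krausChannel E 0 = 0 := by
  simpa using krausChannel_smul (E := E) 0 0

lemma Matrix.PosSemidef.krausChannel {ρ : Matrix (Fin n) (Fin n) ℂ} (hρ : ρ.PosSemidef) :
    (krausChannel E ρ).PosSemidef :=
  posSemidef_sum _ fun k _ => hρ.mul_mul_conjTranspose_same (E k)

lemma trace_krausChannel (hE : ∑ k, (E k)ᴴ * E k = 1) (ρ : Matrix (Fin n) (Fin n) ℂ) :
    (krausChannel E ρ).trace = ρ.trace := by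
  rw [krausChannel, trace_sum]
  simp_rw [trace_mul_cycle (E _)]
  rw [← trace_sum, ← Finset.sum_mul, hE, one_mul]

lemma IsDensity.krausChannel (hE : ∑ k, (E k)ᴴ * E k = 1) {ρ : Matrix (Fin n) (Fin n) ℂ}
    (hρ : IsDensity ρ) : IsDensity (krausChannel E ρ) :=
  ⟨hρ.1.krausChannel, by rw [trace_krausChannel hE, hρ.2]⟩

end Kraus

section Permutation

variable {d : Type*} [Fintype d] [DecidableEq d]

lemma Equiv.Perm.permMatrix_mem_unitaryGroup (σ : Equiv.Perm d) :
    σ.permMatrix ℂ ∈ unitaryGroup d ℂ := by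
  rw [mem_unitaryGroup_iff', star_eq_conjTranspose, conjTranspose_permMatrix, ← permMatrix_mul,
    mul_inv_cancel, permMatrix_one]

lemma Equiv.Perm.permMatrix_mul_mul_conjTranspose (σ : Equiv.Perm d) (M : Matrix d d ℂ) :
    σ.permMatrix ℂ * M * (σ.permMatrix ℂ)ᴴ = M.submatrix σ σ := by
  rw [conjTranspose_permMatrix, Equiv.Perm.permMatrix, Equiv.Perm.permMatrix,
    PEquiv.toMatrix_toPEquiv_mul, PEquiv.mul_toMatrix_toPEquiv, submatrix_submatrix]
  rfl

end Permutation

section Pauli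

variable {n : ℕ}

noncomputable def phase (n : ℕ) (j : Fin n) : ℂ :=
  Complex.exp (2 * π * Complex.I * (j : ℕ) / n)

lemma phase_eq_pow (j : Fin n) :
    phase n j = Complex.exp (2 * π * Complex.I / n) ^ (j : ℕ) := by
  rw [phase, ← Complex.exp_nat_mul]
  congr 1
  ring

variable [NeZero n]

lemma phase_pow_eq_one (j : Fin n) : phase n j ^ n = 1 := by
  rw [phase_eq_pow, pow_right_comm, (Complex.isPrimitiveRoot_exp n (NeZero.ne n)).pow_eq_one,
    one_pow]

lemma star_phase_mul_phase (j : Fin n) : star (phase n j) * phase n j = 1 := by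
  have hnorm : ‖phase n j‖ = 1 := by
    rw [phase_eq_pow, norm_pow, (Complex.isPrimitiveRoot_exp n (NeZero.ne n)).norm'_eq_one
      (NeZero.ne n), one_pow]
  rw [RCLike.star_def, RCLike.conj_mul, hnorm]
  simp

lemma phase_injective : Function.Injective (phase n) := fun a b h => by
  rw [phase_eq_pow, phase_eq_pow] at h
  exact Fin.ext ((Complex.isPrimitiveRoot_exp n (NeZero.ne n)).pow_inj a.isLt b.isLt h)

lemma sum_pow_phase_mul_star_phase (a b : Fin n) :
    ∑ k : Fin n, (phase n a * star (phase n b)) ^ (k : ℕ) = if a = b then (n : ℂ) else 0 := by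
  split_ifs with hab
  · subst hab
    rw [mul_comm, star_phase_mul_phase]
    simp
  · set z := phase n a * star (phase n b)
    have hz1 : z ≠ 1 := fun h => hab <| phase_injective <|
      calc phase n a = z * phase n b := by rw [mul_assoc, star_phase_mul_phase, mul_one]
        _ = phase n b := by rw [h, one_mul]
    have hzn : z ^ n = 1 := by
      rw [mul_pow, ← star_pow, phase_pow_eq_one, phase_pow_eq_one, star_one, one_mul]
    rw [Fin.sum_univ_eq_sum_range (fun k => z ^ k) n]
    exact (mul_eq_zero.mp (by rw [geom_sum_mul, hzn, sub_self])).resolve_right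
      (sub_ne_zero.mpr hz1)

lemma phaseR_pow (k : ℕ) : phaseR n ^ k = diagonal fun j => phase n j ^ k :=
  diagonal_pow _ _

lemma phaseR_mem_unitaryGroup : phaseR n ∈ unitaryGroup (Fin n) ℂ := by
  rw [mem_unitaryGroup_iff', phaseR, star_eq_conjTranspose, diagonal_conjTranspose,
    diagonal_mul_diagonal]
  exact diagonal_eq_one.mpr (funext fun j => star_phase_mul_phase j)

open Fin.CommRing in
lemma shiftT_pow (m : ℕ) :
    shiftT n ^ m = Equiv.Perm.permMatrix ℂ (Equiv.subRight (m : Fin n)) := by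
  induction m with
  | zero =>
    rw [pow_zero, Nat.cast_zero, show Equiv.subRight (0 : Fin n) = 1 from Equiv.ext sub_zero,
      permMatrix_one]
  | succ m ih =>
    have hT : shiftT n = Equiv.Perm.permMatrix ℂ (Equiv.subRight (1 : Fin n)) := by
      ext i j
      simp [shiftT, PEquiv.toMatrix_apply, eq_sub_iff_add_eq, eq_comm]
    rw [pow_succ, ih, hT, ← permMatrix_mul]
    congr 1
    ext x
    simp [sub_sub]

lemma genPauli_mem_unitaryGroup (i : Fin n × Fin n) : genPauli i ∈ unitaryGroup (Fin n) ℂ := by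
  refine mul_mem ?_ (pow_mem phaseR_mem_unitaryGroup _)
  rw [shiftT_pow]
  exact Equiv.Perm.permMatrix_mem_unitaryGroup _

lemma sum_phaseR_pow_conj (M : Matrix (Fin n) (Fin n) ℂ) :
    ∑ k : Fin n, phaseR n ^ (k : ℕ) * M * (phaseR n ^ (k : ℕ))ᴴ
      = (n : ℂ) • diagonal M.diag := by
  ext a b
  simp only [phaseR_pow, diagonal_conjTranspose, diagonal_mul, mul_diagonal, Matrix.sum_apply,
    Pi.star_apply, star_pow]
  rw [show ∑ k : Fin n, phase n a ^ (k : ℕ) * M a b * star (phase n b) ^ (k : ℕ)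
      = (∑ k : Fin n, (phase n a * star (phase n b)) ^ (k : ℕ)) * M a b by
    rw [Finset.sum_mul]; exact Finset.sum_congr rfl fun k _ => by ring]
  rw [sum_pow_phase_mul_star_phase, Matrix.smul_apply, diagonal_apply]
  split_ifs with hab <;> simp [hab]

lemma sum_shiftT_pow_conj_diagonal (v : Fin n → ℂ) :
    ∑ m : Fin n, shiftT n ^ (m : ℕ) * diagonal v * (shiftT n ^ (m : ℕ))ᴴ
      = (∑ j, v j) • (1 : Matrix (Fin n) (Fin n) ℂ) := by
  simp only [shiftT_pow, Equiv.Perm.permMatrix_mul_mul_conjTranspose, submatrix_diagonal_equiv,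
    Fin.cast_val_eq_self]
  ext a b
  rw [Matrix.sum_apply, Matrix.smul_apply, one_apply]
  by_cases hab : a = b
  · subst hab
    simp only [diagonal_apply_eq, if_true, smul_eq_mul, mul_one, Function.comp_apply,
      Equiv.subRight_apply]
    exact Equiv.sum_comp (Equiv.subLeft a) v
  · simp [hab]

lemma sum_genPauli_conj (M : Matrix (Fin n) (Fin n) ℂ) :
    ∑ i : Fin n × Fin n, genPauli i * M * (genPauli i)ᴴ = ((n : ℂ) * M.trace) • 1 := by
  have hsplit : ∀ i : Fin n × Fin n, genPauli i * M * (genPauli i)ᴴ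
      = shiftT n ^ (i.1 : ℕ) * (phaseR n ^ (i.2 : ℕ) * M * (phaseR n ^ (i.2 : ℕ))ᴴ)
        * (shiftT n ^ (i.1 : ℕ))ᴴ := fun i => by
    simp only [genPauli, conjTranspose_mul, Matrix.mul_assoc]
  simp only [hsplit, Fintype.sum_prod_type, ← Finset.mul_sum, ← Finset.sum_mul,
    sum_phaseR_pow_conj, Matrix.mul_smul, Matrix.smul_mul, ← Finset.smul_sum,
    sum_shiftT_pow_conj_diagonal, smul_smul]
  rfl

end Pauli

section Blocks

variable {n : ℕ}

lemma blockAt_posSemidef {ρ : Matrix (Fin n × (Fin n × Fin n)) (Fin n × (Fin n × Fin n)) ℂ}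
    (hρ : ρ.PosSemidef) (i : Fin n × Fin n) : (blockAt i ρ).PosSemidef :=
  hρ.submatrix _

lemma sum_trace_blockAt (ρ : Matrix (Fin n × (Fin n × Fin n)) (Fin n × (Fin n × Fin n)) ℂ) :
    ∑ i, (blockAt i ρ).trace = ρ.trace := by
  simp only [blockAt, Matrix.trace, diag_apply, of_apply]
  rw [Finset.sum_comm, ← Fintype.sum_prod_type']

lemma blockAt_kronecker_single (ρ : Matrix (Fin n) (Fin n) ℂ) (i j : Fin n × Fin n) :
    blockAt j (ρ ⊗ₖ single i i (1 : ℂ)) = if j = i then ρ else 0 := by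
  ext a b
  split_ifs with h
  · simp [blockAt, h]
  · simp [blockAt, Ne.symm h]

lemma isDensity_kronecker_single {ρ : Matrix (Fin n) (Fin n) ℂ} (hρ : IsDensity ρ)
    (i : Fin n × Fin n) : IsDensity (ρ ⊗ₖ single i i (1 : ℂ)) := by
  refine ⟨hρ.1.kronecker ?_, by rw [trace_kronecker, hρ.2, trace_single_eq_same, one_mul]⟩
  rw [← diagonal_single]
  exact PosSemidef.diagonal (Pi.single_nonneg.mpr zero_le_one)

end Blocks

section Holevo

variable {d e : Type*} [Fintype e] [DecidableEq e]

noncomputable def holevoQuantity {ι : Type*} [Fintype ι] (Φ : Matrix d d ℂ → Matrix e e ℂ)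
    (p : ι → ℝ) (ρ : ι → Matrix d d ℂ) : ℝ :=
  vnEntropy (∑ i, (p i : ℂ) • Φ (ρ i)) - ∑ i, p i * vnEntropy (Φ (ρ i))

lemma holevoQuantity_comp_equiv {ι κ : Type*} [Fintype ι] [Fintype κ] (σ : κ ≃ ι)
    (Φ : Matrix d d ℂ → Matrix e e ℂ) (p : ι → ℝ) (ρ : ι → Matrix d d ℂ) :
    holevoQuantity Φ (p ∘ σ) (ρ ∘ σ) = holevoQuantity Φ p ρ := by
  simp only [holevoQuantity, Function.comp_apply,
    Equiv.sum_comp σ (fun i => (p i : ℂ) • Φ (ρ i)),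
    Equiv.sum_comp σ (fun i => p i * vnEntropy (Φ (ρ i)))]

variable [Fintype d]

noncomputable def minOutputEntropy (Φ : Matrix d d ℂ → Matrix e e ℂ) : ℝ :=
  sInf {x : ℝ | ∃ ρ : Matrix d d ℂ, IsDensity ρ ∧ x = vnEntropy (Φ ρ)}

lemma minOutputEntropy_le_vnEntropy {Φ : Matrix d d ℂ → Matrix e e ℂ}
    (hΦ : ∀ ρ, IsDensity ρ → IsDensity (Φ ρ)) {ρ : Matrix d d ℂ} (hρ : IsDensity ρ) :
    minOutputEntropy Φ ≤ vnEntropy (Φ ρ) :=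
  csInf_le ⟨0, by rintro _ ⟨σ, hσ, rfl⟩; exact (hΦ σ hσ).vnEntropy_nonneg⟩ ⟨ρ, hρ, rfl⟩

lemma holevoQuantity_le_log_card_sub [Nonempty e] {Φ : Matrix d d ℂ → Matrix e e ℂ}
    (hΦ : ∀ ρ, IsDensity ρ → IsDensity (Φ ρ)) {c : ℝ}
    (hc : ∀ ρ, IsDensity ρ → c ≤ vnEntropy (Φ ρ)) {ι : Type*} [Fintype ι] {p : ι → ℝ}
    {ρ : ι → Matrix d d ℂ} (hp0 : ∀ i, 0 ≤ p i) (hp1 : ∑ i, p i = 1)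
    (hρ : ∀ i, IsDensity (ρ i)) :
    holevoQuantity Φ p ρ ≤ log (Fintype.card e) - c := by
  have hmix := (isDensity_sum_smul hp0 hp1 fun i => hΦ _ (hρ i)).vnEntropy_le_log_card
  have havg := le_sum_mul_of_forall_le hp0 hp1 fun i => hc _ (hρ i)
  rw [holevoQuantity]
  linarith

end Holevo

section PauliMix

variable {n r : ℕ} [NeZero n] {E : Fin r → Matrix (Fin n) (Fin n) ℂ}

lemma pauliMixChannel_kronecker_single (ρ : Matrix (Fin n) (Fin n) ℂ) (i : Fin n × Fin n) :
    pauliMixChannel E (ρ ⊗ₖ single i i (1 : ℂ))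
      = genPauli i * krausChannel E ρ * (genPauli i)ᴴ := by
  rw [pauliMixChannel, Finset.sum_eq_single i (fun j _ hj => by
      rw [blockAt_kronecker_single, if_neg hj, krausChannel_zero, Matrix.mul_zero,
        Matrix.zero_mul])
    (fun h => absurd (Finset.mem_univ i) h), blockAt_kronecker_single, if_pos rfl]

lemma IsDensity.pauliMixChannel (hE : ∑ k, (E k)ᴴ * E k = 1)
    {ρ : Matrix (Fin n × (Fin n × Fin n)) (Fin n × (Fin n × Fin n)) ℂ} (hρ : IsDensity ρ) :
    IsDensity (pauliMixChannel E ρ) := by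
  refine ⟨posSemidef_sum _ fun i _ =>
    (blockAt_posSemidef hρ.1 i).krausChannel.mul_mul_conjTranspose_same (genPauli i), ?_⟩
  rw [_root_.pauliMixChannel, trace_sum]
  simp only [trace_mul_cycle (genPauli _), ← star_eq_conjTranspose,
    mem_unitaryGroup_iff'.mp (genPauli_mem_unitaryGroup _), one_mul, trace_krausChannel hE]
  rw [sum_trace_blockAt, hρ.2]

lemma minOutputEntropy_le_vnEntropy_pauliMixChannel (hE : ∑ k, (E k)ᴴ * E k = 1)
    {ρ : Matrix (Fin n × (Fin n × Fin n)) (Fin n × (Fin n × Fin n)) ℂ} (hρ : IsDensity ρ) :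
    minOutputEntropy (krausChannel E) ≤ vnEntropy (pauliMixChannel E ρ) := by
  choose σ hσ hblock using fun i => (blockAt_posSemidef hρ.1 i).exists_isDensity_smul_eq
  set q : Fin n × Fin n → ℝ := fun i => (blockAt i ρ).trace.re
  have hq0 : ∀ i, 0 ≤ q i := fun i =>
    (Complex.nonneg_iff.mp (blockAt_posSemidef hρ.1 i).trace_nonneg).1
  have hq1 : ∑ i, q i = 1 := by
    simpa [q, ← Complex.re_sum, sum_trace_blockAt] using congrArg Complex.re hρ.2
  have hΨ : pauliMixChannel E ρ
      = ∑ i, (q i : ℂ) • (genPauli i * krausChannel E (σ i) * (genPauli i)ᴴ) :=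
    Finset.sum_congr rfl fun i _ => by
      rw [hblock i, krausChannel_smul, Matrix.mul_smul, Matrix.smul_mul]
  calc minOutputEntropy (krausChannel E)
      ≤ ∑ i, q i * vnEntropy (genPauli i * krausChannel E (σ i) * (genPauli i)ᴴ) :=
        le_sum_mul_of_forall_le hq0 hq1 fun i => by
          rw [vnEntropy_unitary_conj ((hσ i).krausChannel hE).1.1 (genPauli_mem_unitaryGroup i)]
          exact minOutputEntropy_le_vnEntropy (fun _ => IsDensity.krausChannel hE) (hσ i)
    _ ≤ vnEntropy (pauliMixChannel E ρ) := by
        rw [hΨ]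
        exact sum_mul_vnEntropy_le_vnEntropy_sum_smul hq0 hq1 fun i =>
          ((hσ i).krausChannel hE).1.mul_mul_conjTranspose_same _

lemma holevoQuantity_pauliMixChannel_kronecker_single (hE : ∑ k, (E k)ᴴ * E k = 1)
    {ρ : Matrix (Fin n) (Fin n) ℂ} (hρ : IsDensity ρ) :
    holevoQuantity (pauliMixChannel E) (fun _ => ((n : ℝ) ^ 2)⁻¹)
        (fun i : Fin n × Fin n => ρ ⊗ₖ single i i (1 : ℂ))
      = log n - vnEntropy (krausChannel E ρ) := by
  have hmix : ∑ i : Fin n × Fin n,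
      ((((n : ℝ) ^ 2)⁻¹ : ℝ) : ℂ) • pauliMixChannel E (ρ ⊗ₖ single i i 1)
        = (Fintype.card (Fin n) : ℂ)⁻¹ • (1 : Matrix (Fin n) (Fin n) ℂ) := by
    simp only [pauliMixChannel_kronecker_single, ← Finset.smul_sum, sum_genPauli_conj,
      trace_krausChannel hE, hρ.2, smul_smul, Fintype.card_fin]
    congr 1
    push_cast
    field_simp
  rw [holevoQuantity, hmix, vnEntropy_maximallyMixed]
  simp only [pauliMixChannel_kronecker_single,
    vnEntropy_unitary_conj (hρ.krausChannel hE).1.1 (genPauli_mem_unitaryGroup _),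
    Finset.sum_const, Finset.card_univ, Fintype.card_prod, Fintype.card_fin, nsmul_eq_mul]
  have hn : (n : ℝ) ≠ 0 := Nat.cast_ne_zero.mpr (NeZero.ne n)
  push_cast
  field_simp

lemma exists_ensemble_holevoQuantity_pauliMixChannel_eq (hE : ∑ k, (E k)ᴴ * E k = 1)
    {ρ : Matrix (Fin n) (Fin n) ℂ} (hρ : IsDensity ρ) :
    ∃ (m : ℕ) (p : Fin m → ℝ)
      (ρs : Fin m → Matrix (Fin n × (Fin n × Fin n)) (Fin n × (Fin n × Fin n)) ℂ),
      (∀ i, 0 ≤ p i) ∧ (∑ i, p i = 1) ∧ (∀ i, IsDensity (ρs i)) ∧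
      log n - vnEntropy (krausChannel E ρ) = holevoQuantity (pauliMixChannel E) p ρs := by
  set σ := (Fintype.equivFin (Fin n × Fin n)).symm
  refine ⟨_, fun _ => ((n : ℝ) ^ 2)⁻¹, fun k => ρ ⊗ₖ single (σ k) (σ k) (1 : ℂ),
    fun _ => by positivity, ?_, fun _ => isDensity_kronecker_single hρ _, ?_⟩
  · have hn : (n : ℝ) ≠ 0 := Nat.cast_ne_zero.mpr (NeZero.ne n)
    simp only [Finset.sum_const, Finset.card_univ, Fintype.card_prod, Fintype.card_fin,
      nsmul_eq_mul, Nat.cast_mul]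
    field_simp
  · exact ((holevoQuantity_comp_equiv σ _ _ _).trans
      (holevoQuantity_pauliMixChannel_kronecker_single hE hρ)).symm

end PauliMix

theorem holevo_of_pauli_mix_eq_log_sub_min_entropy
    {n r : ℕ} [NeZero n] (E : Fin r → Matrix (Fin n) (Fin n) ℂ)
    (hE : ∑ k, (E k)ᴴ * E k = 1) :
    holevoCap (pauliMixChannel E) =
      Real.log n - sInf {x : ℝ | ∃ ρ : Matrix (Fin n) (Fin n) ℂ,
        IsDensity ρ ∧ x = vnEntropy (krausChannel E ρ)} := by
  refine csSup_eq_sub_csInf ⟨_, _, isDensity_maximallyMixed, rfl⟩ ?_ ?_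
  · rintro _ ⟨m, p, ρ, hp0, hp1, hρ, rfl⟩
    have h := holevoQuantity_le_log_card_sub (fun _ => IsDensity.pauliMixChannel hE)
      (fun _ => minOutputEntropy_le_vnEntropy_pauliMixChannel hE) hp0 hp1 hρ
    rwa [Fintype.card_fin] at h
  · rintro _ ⟨ρ, hρ, rfl⟩
    exact exists_ensemble_holevoQuantity_pauliMixChannel_eq hE hρ
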